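/- In the V expansion set 𝓑_V, every two-element vertex {b₁, b₂} (b₁ ≠ b₂ with disjoint supports) is the contraction basin of exactly two elements of 𝓑_V: the set {b ∈ 𝓑_V : Bas(b) = {b₁, b₂}} has exactly two members. -/

import Mathlib

/-- The Cantor set `X = ∏_{i=1}^∞ {0,1}`. -/
abbrev Cantor := ℕ → Bool

/-- The cylinder (ball) `B_ω`: all infinite binary sequences with prefix `ω`. -/
def cyl (ω : List Bool) : Set Cantor := {x | ∀ i : Fin ω.length, x i.1 = ω.get i}

/-- The prefix replacement `σ_{α}^{β} : B_α → B_β` (as a total function). -/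
def sigmaMap (α β : List Bool) : Cantor → Cantor :=
  fun x i => if h : i < β.length then β.get ⟨i, h⟩ else x (i - β.length + α.length)

/-- `f` is a disjoint union of finitely many members of `S_V` whose domains
partition `B_ω` (and whose codomains are pairwise disjoint, so `f` is injective). -/
def IsVMap (ω : List Bool) (f : Cantor → Cantor) : Prop :=
  ∃ (n : ℕ) (d c : Fin n → List Bool),
    (⋃ i, cyl (d i)) = cyl ω ∧
    (∀ i j, i ≠ j → Disjoint (cyl (d i)) (cyl (d j))) ∧
    (∀ i j, i ≠ j → Disjoint (cyl (c i)) (cyl (c j))) ∧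
    (∀ i, ∀ x ∈ cyl (d i), f x = sigmaMap (d i) (c i) x)

/-- A V-pair `(f, B_ω)`. -/
structure VPair where
  word : List Bool
  f : Cantor → Cantor
  isV : IsVMap word f

/-- `(f₁, B_{ω₁}) ∼ (f₂, B_{ω₂})`: there is `σ ∈ S_V` carrying `B_{ω₁}` bijectively
onto `B_{ω₂}` with `f₂ ∘ σ = f₁`; such a `σ` is necessarily `σ_{ω₁}^{ω₂}`. -/
def VEquiv (p q : VPair) : Prop :=
  ∀ x ∈ cyl p.word, q.f (sigmaMap p.word q.word x) = p.f x

/-- The V expansion set `𝓑_V`: equivalence classes `[f, B_ω]` of V-pairs. -/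
def BV := Quot VEquiv

noncomputable instance : DecidableEq BV := Classical.decEq BV

/-- `supp([f, B_ω]) = f(B_ω)` (computed from a chosen representative). -/
noncomputable def suppV (b : BV) : Set Cantor :=
  (Quot.out b).f '' cyl (Quot.out b).word

/-- `u = Bas(b)`: `u` is the contraction basin `{[f|_{B_{ω0}}, B_{ω0}], [f|_{B_{ω1}}, B_{ω1}]}`
of `b = [f, B_ω]`. -/
def IsBasV (b : BV) (u : Finset BV) : Prop :=
  ∃ p pl pr : VPair, Quot.mk VEquiv p = b ∧
    pl.word = p.word ++ [false] ∧ pl.f = p.f ∧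
    pr.word = p.word ++ [true] ∧ pr.f = p.f ∧
    u = {Quot.mk VEquiv pl, Quot.mk VEquiv pr}

/-- A vertex of `𝓑_V`. -/
def VIsVertex (v : Finset BV) : Prop :=
  ∀ b₁ ∈ v, ∀ b₂ ∈ v, b₁ ≠ b₂ → Disjoint (suppV b₁) (suppV b₂)

def vsuppV (v : Finset BV) : Set Cantor := ⋃ b ∈ v, suppV b

/-- One expansion step: replace `b ∈ v` by its contraction basin. -/
def stepV (v v' : Finset BV) : Prop :=
  ∃ b ∈ v, ∃ u : Finset BV, IsBasV b u ∧ v' = v.erase b ∪ u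

/-- The ascending-path relation `⪯` on vertices of `𝓑_V`. -/
def precV : Finset BV → Finset BV → Prop := Relation.ReflTransGen stepV

/-!
Two V-pairs `(f₁, B_{ω₁})`, `(f₂, B_{ω₂})` with disjoint images glue to the V-pair
`(f₁ ⊔ f₂, X)` acting as `f₁ ∘ σ_0^{ω₁}` on `B_0` and as `f₂ ∘ σ_1^{ω₂}` on `B_1`, whose
contraction basin is `{[f₁, B_{ω₁}], [f₂, B_{ω₂}]}`. Conversely a V-pair is determined up
to `∼` by the classes of its two halves, so `Bas(b) = {b₁, b₂}` forces `b = [f₁ ⊔ f₂, X]`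
or `b = [f₂ ⊔ f₁, X]`; these differ because their left halves are `b₁` and `b₂`.
-/

open Set Function

section Cylinders

variable {α β ω t : List Bool} {x : Cantor}

theorem mem_cyl : x ∈ cyl ω ↔ ∀ i (h : i < ω.length), x i = ω[i] :=
  ⟨fun hx i h => hx ⟨i, h⟩, fun hx i => hx i.1 i.2⟩

theorem mem_cyl_nil : x ∈ cyl [] := fun i => i.elim0

theorem mem_cyl_singleton {c : Bool} : x ∈ cyl [c] ↔ x 0 = c := by
  simp [mem_cyl]

theorem cyl_append_subset : cyl (α ++ t) ⊆ cyl α := fun x hx =>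
  mem_cyl.2 fun i h => by
    rw [mem_cyl.1 hx i (by simp; omega), List.getElem_append_left h]

theorem mem_cyl_append_singleton (hx : x ∈ cyl ω) : x ∈ cyl (ω ++ [x ω.length]) := by
  refine mem_cyl.2 fun i h => ?_
  by_cases hi : i < ω.length
  · rw [List.getElem_append_left hi, mem_cyl.1 hx i hi]
  · obtain rfl : i = ω.length := by simp at h; omega
    simp

theorem sigmaMap_mem_cyl_append (β : List Bool) (hx : x ∈ cyl (α ++ t)) :
    sigmaMap α β x ∈ cyl (β ++ t) := by
  refine mem_cyl.2 fun i h => ?_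
  rw [List.length_append] at h
  by_cases hi : i < β.length
  · simp [sigmaMap, hi, List.getElem_append_left hi]
  · rw [List.getElem_append_right (by omega)]
    simp only [sigmaMap, hi, dite_false]
    rw [mem_cyl.1 hx _ (by simp; omega), List.getElem_append_right (by omega)]
    congr 1
    omega

theorem sigmaMap_mem_cyl (β : List Bool) (hx : x ∈ cyl α) : sigmaMap α β x ∈ cyl β := by
  simpa using sigmaMap_mem_cyl_append (t := []) β (by simpa using hx)

theorem sigmaMap_append_sigmaMap (α β γ t : List Bool) (x : Cantor) :
    sigmaMap (β ++ t) γ (sigmaMap α β x) = sigmaMap (α ++ t) γ x := by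
  funext i
  by_cases hi : i < γ.length
  · simp [sigmaMap, hi]
  · simp only [sigmaMap, hi, List.length_append, dite_false]
    rw [dif_neg (by omega)]
    congr 1
    omega

theorem sigmaMap_sigmaMap (α β γ : List Bool) (x : Cantor) :
    sigmaMap β γ (sigmaMap α β x) = sigmaMap α γ x := by
  simpa using sigmaMap_append_sigmaMap α β γ [] x

theorem sigmaMap_self (hx : x ∈ cyl α) : sigmaMap α α x = x := by
  funext i
  by_cases hi : i < α.length
  · simp [sigmaMap, hi, mem_cyl.1 hx i hi]
  · simp only [sigmaMap, hi, dite_false]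
    congr 1
    omega

theorem sigmaMap_sigmaMap_of_mem (hx : x ∈ cyl α) : sigmaMap β α (sigmaMap α β x) = x := by
  rw [sigmaMap_sigmaMap, sigmaMap_self hx]

theorem sigmaMap_image_cyl (α β : List Bool) : sigmaMap α β '' cyl α = cyl β :=
  Subset.antisymm (image_subset_iff.2 fun _ => sigmaMap_mem_cyl β)
    fun y hy => ⟨sigmaMap β α y, sigmaMap_mem_cyl α hy, sigmaMap_sigmaMap_of_mem hy⟩

theorem cyl_append_eq_inter_preimage (α β t : List Bool) :
    cyl (α ++ t) = cyl α ∩ sigmaMap α β ⁻¹' cyl (β ++ t) := by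
  refine Subset.antisymm (fun x hx => ⟨cyl_append_subset hx, sigmaMap_mem_cyl_append β hx⟩) ?_
  rintro x ⟨hx, hσx⟩
  simpa only [sigmaMap_sigmaMap_of_mem hx] using sigmaMap_mem_cyl_append α hσx

theorem isPrefix_of_cyl_subset (h : cyl α ⊆ cyl ω) : ω <+: α := by
  let ext (c : Bool) : Cantor := fun i => if hi : i < α.length then α[i] else c
  have hext (c : Bool) : ext c ∈ cyl ω := h <| mem_cyl.2 fun i hi => by simp [ext, hi]
  have hlen : ω.length ≤ α.length := by
    by_contra! hlt
    have := (mem_cyl.1 (hext false) _ hlt).trans (mem_cyl.1 (hext true) _ hlt).symm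
    simp [ext] at this
  refine List.prefix_iff_eq_take.2 (List.ext_getElem (by simp [hlen]) fun i hi _ => ?_)
  simpa [ext, show i < α.length by omega] using (mem_cyl.1 (hext false) i hi).symm

end Cylinders

theorem pairwise_on_fin_append {ι : Type*} {r : ι → ι → Prop} [Std.Symm r] {m n : ℕ}
    {u : Fin m → ι} {v : Fin n → ι} (hu : Pairwise (r on u)) (hv : Pairwise (r on v))
    (huv : ∀ i j, r (u i) (v j)) : Pairwise (r on Fin.append u v) := by
  intro i j hij
  induction i using Fin.addCases <;> induction j using Fin.addCases <;>
    simp only [onFun, Fin.append_left, Fin.append_right]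
  · exact hu fun h => hij (by rw [h])
  · exact huv _ _
  · exact Std.Symm.symm _ _ (huv _ _)
  · exact hv fun h => hij (by rw [h])

theorem cyl_subset_image_of_eqOn_sigmaMap {ω d c : List Bool} {f : Cantor → Cantor}
    (hd : cyl d ⊆ cyl ω) (hf : EqOn f (sigmaMap d c) (cyl d)) : cyl c ⊆ f '' cyl ω := by
  rw [← sigmaMap_image_cyl d c, ← hf.image_eq]
  exact image_mono hd

namespace IsVMap

variable {ω : List Bool} {f : Cantor → Cantor}

theorem congr {g : Cantor → Cantor} (h : IsVMap ω f) (hfg : EqOn f g (cyl ω)) :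
    IsVMap ω g := by
  obtain ⟨n, d, c, hu, hd, hc, hf⟩ := h
  refine ⟨n, d, c, hu, hd, hc, fun i x hx => ?_⟩
  rw [← hf i x hx, hfg (hu ▸ mem_iUnion_of_mem i hx)]

theorem comp_sigmaMap (h : IsVMap ω f) (ω' : List Bool) : IsVMap ω' (f ∘ sigmaMap ω' ω) := by
  obtain ⟨n, d, c, hu, hd, hc, hf⟩ := h
  choose t ht using fun i => isPrefix_of_cyl_subset (hu ▸ subset_iUnion (cyl ∘ d) i)
  have hcyl (i) : cyl (ω' ++ t i) = cyl ω' ∩ sigmaMap ω' ω ⁻¹' cyl (d i) := by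
    rw [← ht i]; exact cyl_append_eq_inter_preimage ω' ω (t i)
  refine ⟨n, fun i => ω' ++ t i, c, ?_, fun i j hij => ?_, hc, fun i x hx => ?_⟩
  · simp only [hcyl, ← inter_iUnion, ← preimage_iUnion, hu]
    exact inter_eq_left.2 fun x => sigmaMap_mem_cyl ω
  · rw [hcyl, hcyl]
    exact ((hd i j hij).preimage _).mono inter_subset_right inter_subset_right
  · rw [hcyl] at hx
    rw [comp_apply, hf i _ hx.2, ← ht i, sigmaMap_append_sigmaMap]

theorem union {α β : List Bool} (hα : IsVMap α f) (hβ : IsVMap β f)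
    (hαβ : Disjoint (cyl α) (cyl β)) (himg : Disjoint (f '' cyl α) (f '' cyl β))
    (hω : cyl α ∪ cyl β = cyl ω) : IsVMap ω f := by
  obtain ⟨m, d₁, c₁, hu₁, hd₁, hc₁, hf₁⟩ := hα
  obtain ⟨n, d₂, c₂, hu₂, hd₂, hc₂, hf₂⟩ := hβ
  have hdom₁ (i) : cyl (d₁ i) ⊆ cyl α := hu₁ ▸ subset_iUnion (cyl ∘ d₁) i
  have hdom₂ (j) : cyl (d₂ j) ⊆ cyl β := hu₂ ▸ subset_iUnion (cyl ∘ d₂) j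
  have : Std.Symm (Disjoint on cyl) := ⟨fun _ _ h => Disjoint.symm h⟩
  refine ⟨m + n, Fin.append d₁ d₂, Fin.append c₁ c₂, ?_,
    pairwise_on_fin_append (r := Disjoint on cyl) hd₁ hd₂ fun i j =>
      hαβ.mono (hdom₁ i) (hdom₂ j),
    pairwise_on_fin_append (r := Disjoint on cyl) hc₁ hc₂ fun i j => himg.mono
      (cyl_subset_image_of_eqOn_sigmaMap (hdom₁ i) (hf₁ i))
      (cyl_subset_image_of_eqOn_sigmaMap (hdom₂ j) (hf₂ j)), ?_⟩
  · rw [← hω, ← hu₁, ← hu₂]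
    refine Subset.antisymm (iUnion_subset fun i => ?_) (union_subset ?_ ?_)
    · induction i using Fin.addCases <;> simp only [Fin.append_left, Fin.append_right]
      exacts [subset_union_of_subset_left (subset_iUnion (cyl ∘ d₁) _) _,
        subset_union_of_subset_right (subset_iUnion (cyl ∘ d₂) _) _]
    · exact iUnion_subset fun i => by
        simpa using subset_iUnion (fun k => cyl (Fin.append d₁ d₂ k)) (Fin.castAdd n i)
    · exact iUnion_subset fun j => by
        simpa using subset_iUnion (fun k => cyl (Fin.append d₁ d₂ k)) (Fin.natAdd m j)
  · intro i
    induction i using Fin.addCases <;> simp only [Fin.append_left, Fin.append_right]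
    exacts [hf₁ _, hf₂ _]

end IsVMap

theorem Finset.pair_eq_pair_iff {α : Type*} [DecidableEq α] {a b c d : α} :
    ({a, b} : Finset α) = {c, d} ↔ a = c ∧ b = d ∨ a = d ∧ b = c := by
  rw [← Finset.coe_inj, Finset.coe_pair, Finset.coe_pair, Set.pair_eq_pair_iff]

theorem vequiv_equivalence : Equivalence VEquiv where
  refl p x hx := by rw [sigmaMap_self hx]
  symm {p q} h y hy := by
    rw [← h _ (sigmaMap_mem_cyl p.word hy), sigmaMap_sigmaMap_of_mem hy]
  trans {p q r} hpq hqr x hx := by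
    rw [← hpq x hx, ← hqr _ (sigmaMap_mem_cyl q.word hx), sigmaMap_sigmaMap]

theorem mk_eq_mk_iff {p q : VPair} : Quot.mk VEquiv p = Quot.mk VEquiv q ↔ VEquiv p q :=
  vequiv_equivalence.quot_mk_eq_iff p q

namespace VPair

def supp (p : VPair) : Set Cantor := p.f '' cyl p.word

theorem supp_eq_of_vequiv {p q : VPair} (h : VEquiv p q) : p.supp = q.supp := by
  rw [supp, supp, ← sigmaMap_image_cyl p.word q.word, image_image]
  exact (image_congr h).symm

theorem _root_.suppV_mk (p : VPair) : suppV (Quot.mk VEquiv p) = p.supp :=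
  supp_eq_of_vequiv (mk_eq_mk_iff.1 (Quot.out_eq _))

def joinFun (g : Bool → VPair) : Cantor → Cantor :=
  fun x => (g (x 0)).f (sigmaMap [x 0] (g (x 0)).word x)

variable (g : Bool → VPair)

theorem joinFun_eqOn (c : Bool) :
    EqOn (joinFun g) ((g c).f ∘ sigmaMap [c] (g c).word) (cyl [c]) := fun x hx => by
  rw [mem_cyl_singleton] at hx
  simp [joinFun, hx]

def half (c : Bool) : VPair :=
  ⟨[c], joinFun g, ((g c).isV.comp_sigmaMap [c]).congr (joinFun_eqOn g c).symm⟩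

theorem half_vequiv (c : Bool) : VEquiv (half g c) (g c) := fun _ hx =>
  (joinFun_eqOn g c hx).symm

def join (hg : Disjoint (g false).supp (g true).supp) : VPair where
  word := []
  f := joinFun g
  isV := by
    refine (half g false).isV.union (half g true).isV ?_ ?_ ?_
    · exact disjoint_left.2 fun _ h₁ h₂ => by
        simp_all [half, mem_cyl_singleton]
    · show Disjoint (half g false).supp (half g true).supp
      rwa [supp_eq_of_vequiv (half_vequiv g false), supp_eq_of_vequiv (half_vequiv g true)]
    · ext x
      simp [half, mem_cyl_singleton, mem_cyl_nil]

variable {g} (hg : Disjoint (g false).supp (g true).supp)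

theorem isBasV_mk_join :
    IsBasV (Quot.mk VEquiv (join g hg)) {Quot.mk VEquiv (g false), Quot.mk VEquiv (g true)} :=
  ⟨join g hg, half g false, half g true, rfl, rfl, rfl, rfl, rfl, by
    rw [Quot.sound (half_vequiv g false), Quot.sound (half_vequiv g true)]⟩

theorem mk_eq_mk_join_of_halves {r : VPair}
    (h : ∀ c, ∀ x ∈ cyl (r.word ++ [c]),
      (g c).f (sigmaMap (r.word ++ [c]) (g c).word x) = r.f x) :
    Quot.mk VEquiv r = Quot.mk VEquiv (join g hg) := by
  refine mk_eq_mk_iff.2 fun x hx => ?_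
  have hxc := mem_cyl_append_singleton hx
  rw [← h _ x hxc, ← sigmaMap_append_sigmaMap r.word [] _ [x r.word.length]]
  exact joinFun_eqOn g _ (sigmaMap_mem_cyl_append [] hxc)

theorem mk_eq_mk_of_mk_join_eq {g' : Bool → VPair} {hg' : Disjoint (g' false).supp (g' true).supp}
    (h : Quot.mk VEquiv (join g hg) = Quot.mk VEquiv (join g' hg')) (c : Bool) :
    Quot.mk VEquiv (g c) = Quot.mk VEquiv (g' c) := by
  have hfun : joinFun g' = joinFun g :=
    funext fun x => by simpa [join, sigmaMap_self mem_cyl_nil] using mk_eq_mk_iff.1 h x mem_cyl_nil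
  have hhalf : half g c = half g' c := by simp [half, hfun]
  rw [← Quot.sound (half_vequiv g c), ← Quot.sound (half_vequiv g' c), hhalf]

theorem isBasV_pair_iff {b : BV} :
    IsBasV b {Quot.mk VEquiv (g false), Quot.mk VEquiv (g true)} ↔
      b = Quot.mk VEquiv (join g hg) ∨ b = Quot.mk VEquiv (join (g ∘ not) hg.symm) := by
  constructor
  · rintro ⟨r, rl, rr, rfl, hlw, hlf, hrw, hrf, hu⟩
    have hhalf {s q : VPair} {c : Bool} (hw : s.word = r.word ++ [c]) (hf : s.f = r.f)
        (h : Quot.mk VEquiv q = Quot.mk VEquiv s) :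
        ∀ x ∈ cyl (r.word ++ [c]), q.f (sigmaMap (r.word ++ [c]) q.word x) = r.f x := by
      rw [← hw, ← hf]
      exact mk_eq_mk_iff.1 h.symm
    rcases (Finset.pair_eq_pair_iff (α := BV)).1 hu with ⟨h₀, h₁⟩ | ⟨h₀, h₁⟩
    · exact Or.inl <| mk_eq_mk_join_of_halves hg fun
        | false => hhalf hlw hlf h₀
        | true => hhalf hrw hrf h₁
    · exact Or.inr <| mk_eq_mk_join_of_halves hg.symm fun
        | false => hhalf hlw hlf h₁
        | true => hhalf hrw hrf h₀
  · rintro (rfl | rfl)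
    · exact isBasV_mk_join hg
    · exact (congrArg _ (Finset.pair_comm (α := BV) _ _)).mp (isBasV_mk_join hg.symm)

end VPair

/-- every two-element vertex `{b₁, b₂}` of `𝓑_V` is the contraction basin
of exactly two elements of `𝓑_V`. -/
theorem BV_basin_two_preimages (b₁ b₂ : BV) (hne : b₁ ≠ b₂)
    (hdisj : Disjoint (suppV b₁) (suppV b₂)) :
    {b : BV | IsBasV b {b₁, b₂}}.ncard = 2 := by
  obtain ⟨p₁, rfl⟩ := Quot.exists_rep b₁
  obtain ⟨p₂, rfl⟩ := Quot.exists_rep b₂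
  let g : Bool → VPair := fun c => bif c then p₂ else p₁
  have hg : Disjoint (g false).supp (g true).supp := by
    rw [suppV_mk, suppV_mk] at hdisj
    exact hdisj
  have hpreimages : {b | IsBasV b {Quot.mk VEquiv p₁, Quot.mk VEquiv p₂}} =
      {Quot.mk VEquiv (VPair.join g hg), Quot.mk VEquiv (VPair.join (g ∘ not) hg.symm)} :=
    Set.ext fun b => VPair.isBasV_pair_iff hg
  exact (congrArg Set.ncard hpreimages).trans
    (Set.ncard_pair fun h => hne (VPair.mk_eq_mk_of_mk_join_eq hg h false))
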